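/- Let f : ℝ^{p×q} → ℝ be given by f(B) = E[ℓ(⟨D, B⟩)] for a random matrix D with E‖D‖_F³ < ∞, where ℓ is the logistic loss (so |ℓ'''| ≤ C_ℓ for an absolute constant, e.g. C_ℓ = 1/(6√3) ≤ 1/10). Suppose ∇f(B*) = 0 and the Hessian quadratic form satisfies ∇²f(B*)[Δ,Δ] ≥ μ‖Δ‖_F² for all Δ with rank(Δ) ≤ 2r. Then for all such Δ with ‖Δ‖_F ≤ 3μ/(2C) where C = C_ℓ·E‖D‖_F³, one has f(B*+Δ) − f(B*) ≥ (μ/4)‖Δ‖_F². -/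

import Mathlib

set_option maxHeartbeats 1000000
set_option synthInstance.maxHeartbeats 400000


open MeasureTheory

/-- The logistic surrogate loss. -/
noncomputable def logisticLoss (u : ℝ) : ℝ := Real.log (1 + Real.exp (-u))

noncomputable def L1fn (u : ℝ) : ℝ := -Real.exp (-u) / (1 + Real.exp (-u))
noncomputable def L2fn (u : ℝ) : ℝ := Real.exp (-u) / (1 + Real.exp (-u))^2
noncomputable def L3fn (u : ℝ) : ℝ :=
  Real.exp (-u) * (Real.exp (-u) - 1) / (1 + Real.exp (-u))^3

lemma one_add_exp_pos (u : ℝ) : 0 < 1 + Real.exp (-u) := by positivity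

lemma hasDerivAt_logisticLoss (u : ℝ) : HasDerivAt logisticLoss (L1fn u) u := by
  have h2 : HasDerivAt (fun v : ℝ => Real.exp (-v)) (-Real.exp (-u)) u := by
    simpa [Function.comp_def] using ((Real.hasDerivAt_exp (-u)).comp u ((hasDerivAt_id u).neg))
  have h3 : HasDerivAt (fun v : ℝ => 1 + Real.exp (-v)) (-Real.exp (-u)) u :=
    h2.const_add 1
  have h4 := (Real.hasDerivAt_log (ne_of_gt (one_add_exp_pos u))).comp u h3
  show HasDerivAt (fun v => logisticLoss v) _ u
  simpa [logisticLoss, L1fn, div_eq_mul_inv, mul_comm, Function.comp_def] using h4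

lemma hasDerivAt_L1fn (u : ℝ) : HasDerivAt L1fn (L2fn u) u := by
  have h2 : HasDerivAt (fun v : ℝ => Real.exp (-v)) (-Real.exp (-u)) u := by
    simpa [Function.comp_def] using ((Real.hasDerivAt_exp (-u)).comp u ((hasDerivAt_id u).neg))
  have h3 : HasDerivAt (fun v : ℝ => 1 + Real.exp (-v)) (-Real.exp (-u)) u :=
    h2.const_add 1
  have h5 : HasDerivAt (fun v : ℝ => (1 + Real.exp (-v))⁻¹ - 1)
      (Real.exp (-u) / (1 + Real.exp (-u))^2) u := by
    have := (h3.inv (ne_of_gt (one_add_exp_pos u))).sub_const 1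
    exact this.congr_deriv (by ring)
  have heq : L1fn = fun v : ℝ => (1 + Real.exp (-v))⁻¹ - 1 := by
    funext v
    have := one_add_exp_pos v
    rw [L1fn]; field_simp; ring
  rw [heq]; exact h5

lemma hasDerivAt_L2fn (u : ℝ) : HasDerivAt L2fn (L3fn u) u := by
  have h2 : HasDerivAt (fun v : ℝ => Real.exp (-v)) (-Real.exp (-u)) u := by
    simpa [Function.comp_def] using ((Real.hasDerivAt_exp (-u)).comp u ((hasDerivAt_id u).neg))
  have h3 : HasDerivAt (fun v : ℝ => 1 + Real.exp (-v)) (-Real.exp (-u)) u :=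
    h2.const_add 1
  have hpow : HasDerivAt (fun v : ℝ => (1 + Real.exp (-v))^2)
      (2 * (1 + Real.exp (-u)) * (-Real.exp (-u))) u := by
    simpa [Function.comp_def, Pi.pow_def] using h3.pow 2
  have hne : ((1 + Real.exp (-u))^2) ≠ 0 := by positivity
  have hinv := hpow.inv hne
  have hmul := h2.mul hinv
  have : HasDerivAt (fun v : ℝ => Real.exp (-v) * ((1 + Real.exp (-v))^2)⁻¹)
      (L3fn u) u := by
    refine hmul.congr_deriv ?_
    simp only [Pi.inv_apply]
    have h0 := one_add_exp_pos u
    rw [L3fn]; field_simp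
    ring
  have heq : L2fn = fun v : ℝ => Real.exp (-v) * ((1 + Real.exp (-v))^2)⁻¹ := by
    funext v; simp [L2fn, div_eq_mul_inv]
  rw [heq]; exact this

lemma abs_L1fn_le (u : ℝ) : |L1fn u| ≤ 1 := by
  have h := one_add_exp_pos u
  have he := Real.exp_pos (-u)
  rw [L1fn, abs_div, abs_of_pos h, abs_of_neg (by linarith : -Real.exp (-u) < 0)]
  rw [div_le_one h]; linarith

lemma L2fn_nonneg (u : ℝ) : 0 ≤ L2fn u := by
  have he := Real.exp_pos (-u)
  exact div_nonneg he.le (by positivity)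

lemma L2fn_le_one (u : ℝ) : L2fn u ≤ 1 := by
  have h := one_add_exp_pos u
  have he := Real.exp_pos (-u)
  rw [L2fn, div_le_one (by positivity)]
  nlinarith

lemma cubic_key {x : ℝ} (hx : 0 < x) :
    |x * (x-1)| * (6 * Real.sqrt 3) ≤ (1+x)^3 := by
  have hs3 : (0:ℝ) < Real.sqrt 3 := Real.sqrt_pos.2 (by norm_num)
  have hs3sq : Real.sqrt 3 ^ 2 = 3 := Real.sq_sqrt (by norm_num)
  have key : (|x * (x-1)| * (6 * Real.sqrt 3))^2 ≤ ((1+x)^3)^2 := by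
    have h14 : (0:ℝ) ≤ x^2 + 14*x + 1 := by nlinarith
    nlinarith [mul_nonneg (sq_nonneg (x^2 - 4*x + 1)) h14, sq_abs (x*(x-1))]
  have h1 : (0:ℝ) ≤ |x * (x-1)| * (6 * Real.sqrt 3) := by positivity
  have h2 : (0:ℝ) ≤ (1+x)^3 := by positivity
  exact (pow_le_pow_iff_left₀ h1 h2 (two_ne_zero)).mp key

lemma abs_L3fn_le (u : ℝ) : |L3fn u| ≤ 1 / (6 * Real.sqrt 3) := by
  have hs3 : (0:ℝ) < Real.sqrt 3 := Real.sqrt_pos.2 (by norm_num)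
  have hx : 0 < Real.exp (-u) := Real.exp_pos _
  have h1x : (0:ℝ) < 1 + Real.exp (-u) := by linarith
  rw [L3fn, abs_div, abs_of_pos (by positivity : (0:ℝ) < (1+Real.exp (-u))^3)]
  rw [div_le_div_iff₀ (by positivity) (by positivity)]
  calc |Real.exp (-u) * (Real.exp (-u) - 1)| * (6 * Real.sqrt 3)
      ≤ (1 + Real.exp (-u))^3 := cubic_key hx
    _ = 1 * (1 + Real.exp (-u))^3 := by ring

/-- Comparison helper: if `|φ'| ≤ b` pointwise with `b` even and continuous,
then `|φ u - φ 0| ≤ ∫_0^{|u|} b`. -/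
lemma abs_le_integral_bound {φ ψ b : ℝ → ℝ}
    (hφ : ∀ t, HasDerivAt φ (ψ t) t) (hψ : Continuous ψ) (hb : Continuous b)
    (hle : ∀ t, |ψ t| ≤ b t) (heven : ∀ t, b (-t) = b t) (u : ℝ) :
    |φ u - φ 0| ≤ ∫ s in (0:ℝ)..|u|, b s := by
  have hI : ∀ x y : ℝ, φ y - φ x = ∫ s in x..y, ψ s := fun x y =>
    (intervalIntegral.integral_eq_sub_of_hasDerivAt (fun t _ => hφ t)
      (hψ.intervalIntegrable x y)).symm
  rcases le_or_gt 0 u with h | h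
  · rw [abs_of_nonneg h, hI 0 u]
    calc |∫ s in (0:ℝ)..u, ψ s| ≤ ∫ s in (0:ℝ)..u, |ψ s| :=
          intervalIntegral.abs_integral_le_integral_abs h
      _ ≤ ∫ s in (0:ℝ)..u, b s :=
          intervalIntegral.integral_mono_on h (hψ.abs.intervalIntegrable _ _)
            (hb.intervalIntegrable _ _) (fun x _ => hle x)
  · have h0 : φ u - φ 0 = -(φ 0 - φ u) := by ring
    rw [abs_of_neg h, h0, abs_neg, hI u 0]
    have hflip : (∫ s in (0:ℝ)..(-u), b s) = ∫ s in u..(0:ℝ), b s := by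
      have := intervalIntegral.integral_comp_neg (a := (0:ℝ)) (b := -u) (f := b)
      simp only [neg_neg, neg_zero] at this
      rw [← this]
      exact intervalIntegral.integral_congr (fun x _ => (heven x).symm)
    rw [hflip]
    calc |∫ s in u..(0:ℝ), ψ s| ≤ ∫ s in u..(0:ℝ), |ψ s| :=
          intervalIntegral.abs_integral_le_integral_abs h.le
      _ ≤ ∫ s in u..(0:ℝ), b s :=
          intervalIntegral.integral_mono_on h.le (hψ.abs.intervalIntegrable _ _)
            (hb.intervalIntegrable _ _) (fun x _ => hle x)


lemma continuous_L1fn : Continuous L1fn := by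
  apply Continuous.div (by fun_prop) (by fun_prop)
  exact fun x => ne_of_gt (one_add_exp_pos x)

lemma continuous_L2fn : Continuous L2fn := by
  apply Continuous.div (by fun_prop) (by fun_prop)
  exact fun x => by positivity

lemma continuous_L3fn : Continuous L3fn := by
  apply Continuous.div (by fun_prop) (by fun_prop)
  exact fun x => by positivity

lemma continuous_logisticLoss : Continuous logisticLoss := by
  have h : Differentiable ℝ logisticLoss := fun u => (hasDerivAt_logisticLoss u).differentiableAt
  exact h.continuous

open intervalIntegral in
/-- Quantitative third-order Taylor bound for the logistic loss. -/
lemma logistic_taylor (a u : ℝ) :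
    |logisticLoss (a+u) - logisticLoss a - L1fn a * u - L2fn a * (u^2/2)|
      ≤ (1 / (6 * Real.sqrt 3)) * |u|^3 / 6 := by
  set M : ℝ := 1 / (6 * Real.sqrt 3) with hM
  have hMpos : 0 < M := by
    have : (0:ℝ) < Real.sqrt 3 := Real.sqrt_pos.2 (by norm_num)
    positivity
  -- Stage 1: |L2fn (a+t) - L2fn a| ≤ M * |t|
  have stage1 : ∀ t : ℝ, |L2fn (a+t) - L2fn a| ≤ M * |t| := by
    intro t
    have hφ : ∀ s : ℝ, HasDerivAt (fun s => L2fn (a+s)) (L3fn (a+s)) s := by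
      intro s
      simpa [Function.comp_def] using (hasDerivAt_L2fn (a+s)).comp s ((hasDerivAt_id s).const_add a)
    have h := abs_le_integral_bound (φ := fun s => L2fn (a+s)) (ψ := fun s => L3fn (a+s))
      (b := fun _ => M) hφ (continuous_L3fn.comp (by fun_prop)) continuous_const
      (fun s => abs_L3fn_le (a+s)) (fun _ => rfl) t
    rw [intervalIntegral.integral_const, smul_eq_mul, sub_zero, mul_comm] at h
    simpa using h
  -- Stage 2: |L1fn (a+t) - L1fn a - L2fn a * t| ≤ M * t^2 / 2
  have stage2 : ∀ t : ℝ, |L1fn (a+t) - L1fn a - L2fn a * t| ≤ M * t^2 / 2 := by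
    intro t
    have hφ : ∀ s : ℝ, HasDerivAt (fun s => L1fn (a+s) - L1fn a - L2fn a * s)
        (L2fn (a+s) - L2fn a) s := by
      intro s
      have h1 : HasDerivAt (fun s : ℝ => L1fn (a+s)) (L2fn (a+s)) s := by
        simpa [Function.comp_def] using (hasDerivAt_L1fn (a+s)).comp s ((hasDerivAt_id s).const_add a)
      simpa [Pi.sub_def] using (h1.sub_const (L1fn a)).sub ((hasDerivAt_id s).const_mul (L2fn a))
    have hψc : Continuous (fun s => L2fn (a+s) - L2fn a) :=
      (continuous_L2fn.comp (continuous_const.add continuous_id)).sub continuous_const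
    have h := abs_le_integral_bound (φ := fun s => L1fn (a+s) - L1fn a - L2fn a * s)
      (ψ := fun s => L2fn (a+s) - L2fn a) (b := fun s => M * |s|) hφ
      hψc (continuous_const.mul continuous_abs) stage1 (fun s => by simp) t
    have hval : (∫ s in (0:ℝ)..|t|, M * |s|) = M * t^2 / 2 := by
      have hcong : (∫ s in (0:ℝ)..|t|, M * |s|) = ∫ s in (0:ℝ)..|t|, M * s := by
        apply intervalIntegral.integral_congr
        intro x hx
        rw [Set.uIcc_of_le (abs_nonneg t)] at hx
        show M * |x| = M * x
        rw [abs_of_nonneg hx.1]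
      rw [hcong, intervalIntegral.integral_const_mul, integral_id]
      rw [sq_abs]; ring
    simpa [hval] using h
  -- Stage 3
  have hφ : ∀ s : ℝ, HasDerivAt
      (fun s => logisticLoss (a+s) - logisticLoss a - L1fn a * s - L2fn a * (s^2/2))
      (L1fn (a+s) - L1fn a - L2fn a * s) s := by
    intro s
    have h1 : HasDerivAt (fun s : ℝ => logisticLoss (a+s)) (L1fn (a+s)) s := by
      simpa [Function.comp_def] using (hasDerivAt_logisticLoss (a+s)).comp s ((hasDerivAt_id s).const_add a)
    have h2 : HasDerivAt (fun s : ℝ => s^2/2) s s := by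
      simpa using ((hasDerivAt_pow 2 s).div_const 2)
    have := ((h1.sub_const (logisticLoss a)).sub
      ((hasDerivAt_id s).const_mul (L1fn a))).sub (h2.const_mul (L2fn a))
    exact this.congr_deriv (by ring)
  have h := abs_le_integral_bound
    (φ := fun s => logisticLoss (a+s) - logisticLoss a - L1fn a * s - L2fn a * (s^2/2))
    (ψ := fun s => L1fn (a+s) - L1fn a - L2fn a * s) (b := fun s => M * s^2 / 2) hφ
    (((continuous_L1fn.comp (continuous_const.add continuous_id)).sub
      continuous_const).sub (continuous_const.mul continuous_id))
    (by fun_prop) stage2 (fun s => by ring) u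
  have hval : (∫ s in (0:ℝ)..|u|, M * s^2 / 2) = M * |u|^3 / 6 := by
    have : (∫ s in (0:ℝ)..|u|, M * s^2 / 2) = (M/2) * ∫ s in (0:ℝ)..|u|, s^2 := by
      rw [← intervalIntegral.integral_const_mul]
      apply intervalIntegral.integral_congr
      intro x _
      show M * x^2 / 2 = M/2 * x^2
      ring
    rw [this, integral_pow]
    ring
  simpa [hval] using h

section Vector

variable {E : Type*} [NormedAddCommGroup E] [InnerProductSpace ℝ E] [CompleteSpace E]
variable {Ω : Type*} [MeasurableSpace Ω] {P : Measure Ω}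

lemma abs_logisticLoss_le (u : ℝ) : |logisticLoss u| ≤ Real.log 2 + |u| := by
  have h1 : (0:ℝ) < 1 + Real.exp (-u) := one_add_exp_pos u
  have hnn : 0 ≤ logisticLoss u := Real.log_nonneg (by nlinarith [Real.exp_pos (-u)])
  rw [abs_of_nonneg hnn, logisticLoss]
  have hle : 1 + Real.exp (-u) ≤ 2 * Real.exp |u| := by
    have h2 : Real.exp (-u) ≤ Real.exp |u| := Real.exp_le_exp.2 (neg_le_abs u)
    have h3 : (1:ℝ) ≤ Real.exp |u| := Real.one_le_exp (abs_nonneg u)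
    linarith
  calc Real.log (1 + Real.exp (-u)) ≤ Real.log (2 * Real.exp |u|) :=
        Real.log_le_log h1 hle
    _ = Real.log 2 + |u| := by
        rw [Real.log_mul (by norm_num) (Real.exp_ne_zero _), Real.log_exp]

noncomputable def F1 (D : Ω → E) (B : E) (ω : Ω) : E →L[ℝ] ℝ :=
  L1fn (inner ℝ (D ω) B) • innerSL ℝ (D ω)

noncomputable def F2 (D : Ω → E) (B : E) (ω : Ω) : E →L[ℝ] (E →L[ℝ] ℝ) :=
  (L2fn (inner ℝ (D ω) B) • innerSL ℝ (D ω)).smulRight (innerSL ℝ (D ω))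

lemma norm_F1_le (D : Ω → E) (B : E) (ω : Ω) : ‖F1 D B ω‖ ≤ ‖D ω‖ := by
  rw [F1]
  refine le_trans (ContinuousLinearMap.opNorm_smul_le _ _) ?_
  rw [innerSL_apply_norm]
  calc ‖L1fn (inner ℝ (D ω) B)‖ * ‖D ω‖ ≤ 1 * ‖D ω‖ := by
        apply mul_le_mul_of_nonneg_right _ (norm_nonneg _)
        rw [Real.norm_eq_abs]; exact abs_L1fn_le _
    _ = ‖D ω‖ := one_mul _

lemma norm_F2_le (D : Ω → E) (B : E) (ω : Ω) : ‖F2 D B ω‖ ≤ ‖D ω‖^2 := by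
  rw [F2, ContinuousLinearMap.norm_smulRight_apply, innerSL_apply_norm]
  have h2 : ‖L2fn (inner ℝ (D ω) B) • innerSL ℝ (D ω)‖ ≤ ‖D ω‖ := by
    refine le_trans (ContinuousLinearMap.opNorm_smul_le _ _) ?_
    rw [innerSL_apply_norm]
    have h1 : ‖L2fn (inner ℝ (D ω) B)‖ ≤ 1 := by
      rw [Real.norm_eq_abs, abs_of_nonneg (L2fn_nonneg _)]; exact L2fn_le_one _
    nlinarith [norm_nonneg (D ω)]
  nlinarith [norm_nonneg (D ω), norm_nonneg (L2fn (inner ℝ (D ω) B : ℝ) • innerSL ℝ (D ω))]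

lemma hasFDerivAt_inner_right (v x : E) :
    HasFDerivAt (fun y : E => (inner ℝ v y : ℝ)) (innerSL ℝ v) x := by
  have h : (fun y : E => (inner ℝ v y : ℝ)) = ⇑(innerSL ℝ v) := by
    funext y; simp
  rw [h]; exact (innerSL ℝ v).hasFDerivAt

lemma hasFDerivAt_integrand1 (D : Ω → E) (ω : Ω) (x : E) :
    HasFDerivAt (fun B : E => logisticLoss (inner ℝ (D ω) B)) (F1 D x ω) x :=
  (hasDerivAt_logisticLoss _).comp_hasFDerivAt x (hasFDerivAt_inner_right (D ω) x)

lemma hasFDerivAt_integrand2 (D : Ω → E) (ω : Ω) (x : E) :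
    HasFDerivAt (fun B : E => F1 D B ω) (F2 D x ω) x := by
  have hc : HasFDerivAt (fun B : E => L1fn (inner ℝ (D ω) B))
      (L2fn (inner ℝ (D ω) x) • innerSL ℝ (D ω)) x :=
    (hasDerivAt_L1fn _).comp_hasFDerivAt x (hasFDerivAt_inner_right (D ω) x)
  exact hc.smul_const (innerSL ℝ (D ω))

lemma meas_F1 (D : Ω → E) (hDmeas : AEStronglyMeasurable D P) (B : E) :
    AEStronglyMeasurable (F1 D B) P :=
  ((continuous_L1fn.comp_aestronglyMeasurable
      (hDmeas.inner aestronglyMeasurable_const)).smul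
    ((innerSL ℝ (E := E)).continuous.comp_aestronglyMeasurable hDmeas))

lemma meas_F2 (D : Ω → E) (hDmeas : AEStronglyMeasurable D P) (B : E) :
    AEStronglyMeasurable (F2 D B) P := by
  have h1 : AEStronglyMeasurable (fun ω => L2fn (inner ℝ (D ω) B) • innerSL ℝ (D ω)) P :=
    ((continuous_L2fn.comp_aestronglyMeasurable
        (hDmeas.inner aestronglyMeasurable_const)).smul
      ((innerSL ℝ (E := E)).continuous.comp_aestronglyMeasurable hDmeas))
  have h2 : AEStronglyMeasurable (fun ω => innerSL ℝ (D ω)) P :=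
    (innerSL ℝ (E := E)).continuous.comp_aestronglyMeasurable hDmeas
  have hΦ : Continuous (fun p : (E →L[ℝ] ℝ) × (E →L[ℝ] ℝ) => p.1.smulRight p.2) := by
    have := (ContinuousLinearMap.smulRightL ℝ E (E →L[ℝ] ℝ)).continuous
    exact isBoundedBilinearMap_apply.continuous.comp
      ((this.comp continuous_fst).prodMk continuous_snd)
  exact hΦ.comp_aestronglyMeasurable (h1.prodMk h2)

lemma integrable_logistic_comp [IsProbabilityMeasure P] (D : Ω → E)
    (hDmeas : AEStronglyMeasurable D P)
    (hD1 : Integrable (fun ω => ‖D ω‖) P) (B : E) :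
    Integrable (fun ω => logisticLoss (inner ℝ (D ω) B)) P := by
  apply Integrable.mono' ((integrable_const (Real.log 2)).add (hD1.const_mul ‖B‖))
  · exact continuous_logisticLoss.comp_aestronglyMeasurable
      (hDmeas.inner aestronglyMeasurable_const)
  · refine Filter.Eventually.of_forall (fun ω => ?_)
    rw [Real.norm_eq_abs]
    calc |logisticLoss (inner ℝ (D ω) B)| ≤ Real.log 2 + |(inner ℝ (D ω) B : ℝ)| :=
          abs_logisticLoss_le _
      _ ≤ Real.log 2 + ‖B‖ * ‖D ω‖ := by
          have := norm_inner_le_norm (𝕜 := ℝ) (D ω) B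
          rw [Real.norm_eq_abs] at this
          nlinarith [this]

lemma hasFDerivAt_f [IsProbabilityMeasure P] (D : Ω → E)
    (hDmeas : AEStronglyMeasurable D P)
    (hD1 : Integrable (fun ω => ‖D ω‖) P) (B : E) :
    HasFDerivAt (fun B : E => ∫ ω, logisticLoss (inner ℝ (D ω) B) ∂P)
      (∫ ω, F1 D B ω ∂P) B := by
  apply hasFDerivAt_integral_of_dominated_of_fderiv_le (F' := fun B ω => F1 D B ω)
    (bound := fun ω => ‖D ω‖) (s := Metric.ball B 1) (Metric.ball_mem_nhds B one_pos)
  · exact Filter.Eventually.of_forall (fun x =>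
      continuous_logisticLoss.comp_aestronglyMeasurable
        (hDmeas.inner aestronglyMeasurable_const))
  · exact integrable_logistic_comp D hDmeas hD1 B
  · exact meas_F1 D hDmeas B
  · exact Filter.Eventually.of_forall (fun ω => fun x _ => norm_F1_le D x ω)
  · exact hD1
  · exact Filter.Eventually.of_forall (fun ω => fun x _ => hasFDerivAt_integrand1 D ω x)

lemma hasFDerivAt_f' [IsProbabilityMeasure P] (D : Ω → E)
    (hDmeas : AEStronglyMeasurable D P)
    (hD1 : Integrable (fun ω => ‖D ω‖) P)
    (hD2 : Integrable (fun ω => ‖D ω‖^2) P) (B : E) :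
    HasFDerivAt (fun B : E => ∫ ω, F1 D B ω ∂P) (∫ ω, F2 D B ω ∂P) B := by
  apply hasFDerivAt_integral_of_dominated_of_fderiv_le (F' := fun B ω => F2 D B ω)
    (bound := fun ω => ‖D ω‖^2) (s := Metric.ball B 1) (Metric.ball_mem_nhds B one_pos)
  · exact Filter.Eventually.of_forall (fun x => meas_F1 D hDmeas x)
  · exact Integrable.mono' hD1 (meas_F1 D hDmeas B)
      (Filter.Eventually.of_forall (fun ω => norm_F1_le D B ω))
  · exact meas_F2 D hDmeas B
  · exact Filter.Eventually.of_forall (fun ω => fun x _ => norm_F2_le D x ω)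
  · exact hD2
  · exact Filter.Eventually.of_forall (fun ω => fun x _ => hasFDerivAt_integrand2 D ω x)

end Vector

/-- The matrix associated to a point of `EuclideanSpace ℝ (Fin p × Fin q)`. -/
def matOf {p q : ℕ} (x : EuclideanSpace ℝ (Fin p × Fin q)) :
    Matrix (Fin p) (Fin q) ℝ :=
  Matrix.of fun i j => x (i, j)

/-- The rank of a point of `EuclideanSpace ℝ (Fin p × Fin q)` viewed as a matrix. -/
noncomputable def rkOf {p q : ℕ} (x : EuclideanSpace ℝ (Fin p × Fin q)) : ℕ :=
  (matOf x).rank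

/-- Local restricted strong convexity of the population risk
`f(B) = E[ℓ(⟨D, B⟩)]` for the logistic loss `ℓ`. If `∇f(B⋆) = 0` and the Hessian
quadratic form is `≥ μ‖Δ‖²` on rank-`2r` directions, then for every such `Δ` with
`‖Δ‖ ≤ 3μ/(2C)` where `C = (1/(6√3))·E‖D‖³`, one has
`f(B⋆+Δ) - f(B⋆) ≥ (μ/4)‖Δ‖²`. -/
theorem population_local_rsc {p q : ℕ} (r : ℕ) (μ : ℝ) (hμ : 0 < μ)
    {Ω : Type*} [MeasurableSpace Ω] (P : Measure Ω) [IsProbabilityMeasure P]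
    (D : Ω → EuclideanSpace ℝ (Fin p × Fin q))
    (hDmeas : AEStronglyMeasurable D P)
    (hDmom : Integrable (fun ω => ‖D ω‖ ^ 3) P)
    (f : EuclideanSpace ℝ (Fin p × Fin q) → ℝ)
    (hf : f = fun B => ∫ ω, logisticLoss (inner ℝ (D ω) B) ∂P)
    (Bstar : EuclideanSpace ℝ (Fin p × Fin q))
    (hcrit : gradient f Bstar = 0)
    (hHess : ∀ Δ : EuclideanSpace ℝ (Fin p × Fin q), rkOf Δ ≤ 2 * r →
      iteratedFDeriv ℝ 2 f Bstar ![Δ, Δ] ≥ μ * ‖Δ‖ ^ 2) :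
    ∀ Δ : EuclideanSpace ℝ (Fin p × Fin q), rkOf Δ ≤ 2 * r →
      ‖Δ‖ ≤ 3 * μ / (2 * ((1 / (6 * Real.sqrt 3)) * ∫ ω, ‖D ω‖ ^ 3 ∂P)) →
      f (Bstar + Δ) - f Bstar ≥ (μ / 4) * ‖Δ‖ ^ 2 := by
  have hMpos : (0:ℝ) < 1 / (6 * Real.sqrt 3) := by
    have : (0:ℝ) < Real.sqrt 3 := Real.sqrt_pos.2 (by norm_num)
    positivity
  subst hf
  intro Δ hrk hrad
  -- integrability of moments
  have hD1 : Integrable (fun ω => ‖D ω‖) P := by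
    refine ((integrable_const (1:ℝ)).add hDmom).mono' hDmeas.norm ?_
    refine Filter.Eventually.of_forall (fun ω => ?_)
    have ha := norm_nonneg (D ω)
    rw [Real.norm_eq_abs, abs_of_nonneg ha]
    show ‖D ω‖ ≤ 1 + ‖D ω‖^3
    nlinarith [mul_nonneg ha (sq_nonneg (‖D ω‖ - 1)), sq_nonneg (‖D ω‖ - 1)]
  have hD2 : Integrable (fun ω => ‖D ω‖^2) P := by
    refine ((integrable_const (1:ℝ)).add hDmom).mono' (hDmeas.norm.pow 2) ?_
    refine Filter.Eventually.of_forall (fun ω => ?_)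
    have ha := norm_nonneg (D ω)
    rw [Real.norm_eq_abs, abs_of_nonneg (by positivity)]
    show ‖D ω‖^2 ≤ 1 + ‖D ω‖^3
    nlinarith [mul_nonneg ha (sq_nonneg (‖D ω‖ - 1)), sq_nonneg (2*‖D ω‖ - 1)]
  -- first derivative everywhere
  have hder := fun B => hasFDerivAt_f D hDmeas hD1 B
  have hfd : (fderiv ℝ (fun B => ∫ ω, logisticLoss (inner ℝ (D ω) B) ∂P))
      = fun B => ∫ ω, F1 D B ω ∂P := funext (fun B => (hder B).fderiv)
  -- gradient zero gives fderiv zero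
  have hgrad : fderiv ℝ (fun B => ∫ ω, logisticLoss (inner ℝ (D ω) B) ∂P) Bstar = 0 := by
    have h := congrArg (InnerProductSpace.toDual ℝ (EuclideanSpace ℝ (Fin p × Fin q))) hcrit
    unfold gradient at h
    simpa using h
  have hintF1 : Integrable (F1 D Bstar) P :=
    hD1.mono' (meas_F1 D hDmeas Bstar) (Filter.Eventually.of_forall (norm_F1_le D Bstar))
  have hgrad0 : ∫ ω, L1fn (inner ℝ (D ω) Bstar) * (inner ℝ (D ω) Δ : ℝ) ∂P = 0 := by
    have h1 : (∫ ω, F1 D Bstar ω ∂P) Δ = 0 := by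
      rw [← (hder Bstar).fderiv, hgrad]
      simp
    rw [ContinuousLinearMap.integral_apply hintF1 Δ] at h1
    rw [← h1]
    apply integral_congr_ae
    refine Filter.Eventually.of_forall (fun ω => ?_)
    simp [F1, ContinuousLinearMap.smul_apply, innerSL_apply_apply, smul_eq_mul]
  -- second derivative
  have hsec : HasFDerivAt (fderiv ℝ (fun B => ∫ ω, logisticLoss (inner ℝ (D ω) B) ∂P))
      (∫ ω, F2 D Bstar ω ∂P) Bstar := by
    rw [hfd]; exact hasFDerivAt_f' D hDmeas hD1 hD2 Bstar
  have hintF2 :=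
    hD2.mono' (f := F2 D Bstar) (meas_F2 D hDmeas Bstar) (Filter.Eventually.of_forall (norm_F2_le D Bstar))
  have hintF2a : Integrable (fun ω => F2 D Bstar ω Δ) P := by
    refine (hD2.mul_const ‖Δ‖).mono' ?_ ?_
    · exact (ContinuousLinearMap.apply ℝ
        (EuclideanSpace ℝ (Fin p × Fin q) →L[ℝ] ℝ) Δ).continuous.comp_aestronglyMeasurable
        (meas_F2 D hDmeas Bstar)
    · refine Filter.Eventually.of_forall (fun ω => ?_)
      calc ‖F2 D Bstar ω Δ‖ ≤ ‖F2 D Bstar ω‖ * ‖Δ‖ := ContinuousLinearMap.le_opNorm _ _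
        _ ≤ ‖D ω‖^2 * ‖Δ‖ :=
            mul_le_mul_of_nonneg_right (norm_F2_le D Bstar ω) (norm_nonneg _)
  have hHessEq : iteratedFDeriv ℝ 2 (fun B => ∫ ω, logisticLoss (inner ℝ (D ω) B) ∂P)
      Bstar ![Δ, Δ]
      = ∫ ω, L2fn (inner ℝ (D ω) Bstar) * (inner ℝ (D ω) Δ : ℝ)^2 ∂P := by
    rw [iteratedFDeriv_two_apply, hsec.fderiv]
    simp only [Matrix.cons_val_zero, Matrix.cons_val_one, Matrix.head_cons]
    rw [ContinuousLinearMap.integral_apply hintF2 Δ,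
      ContinuousLinearMap.integral_apply hintF2a Δ]
    apply integral_congr_ae
    refine Filter.Eventually.of_forall (fun ω => ?_)
    simp only [F2, ContinuousLinearMap.smulRight_apply, ContinuousLinearMap.smul_apply,
      innerSL_apply_apply, smul_eq_mul]
    ring
  -- measurability of scalar pieces
  have hmeasa : AEStronglyMeasurable (fun ω => (inner ℝ (D ω) Bstar : ℝ)) P :=
    hDmeas.inner aestronglyMeasurable_const
  have hmeasu : AEStronglyMeasurable (fun ω => (inner ℝ (D ω) Δ : ℝ)) P :=
    hDmeas.inner aestronglyMeasurable_const
  have huabs : ∀ ω, |(inner ℝ (D ω) Δ : ℝ)| ≤ ‖D ω‖ * ‖Δ‖ := by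
    intro ω
    have := norm_inner_le_norm (𝕜 := ℝ) (D ω) Δ
    rwa [Real.norm_eq_abs] at this
  -- integrability of scalar pieces
  have hint_g2 : Integrable (fun ω => L1fn (inner ℝ (D ω) Bstar) * (inner ℝ (D ω) Δ : ℝ)) P := by
    refine (hD1.mul_const ‖Δ‖).mono'
      ((continuous_L1fn.comp_aestronglyMeasurable hmeasa).mul hmeasu) ?_
    refine Filter.Eventually.of_forall (fun ω => ?_)
    rw [Real.norm_eq_abs, abs_mul]
    have h1 := abs_L1fn_le (inner ℝ (D ω) Bstar : ℝ)
    have h2 := huabs ω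
    nlinarith [abs_nonneg (inner ℝ (D ω) Δ : ℝ), abs_nonneg (L1fn (inner ℝ (D ω) Bstar : ℝ))]
  have hint_g3 : Integrable (fun ω => L2fn (inner ℝ (D ω) Bstar) * (inner ℝ (D ω) Δ : ℝ)^2) P := by
    refine (hD2.mul_const (‖Δ‖^2)).mono'
      ((continuous_L2fn.comp_aestronglyMeasurable hmeasa).mul
        ((continuous_pow 2).comp_aestronglyMeasurable hmeasu)) ?_
    refine Filter.Eventually.of_forall (fun ω => ?_)
    rw [Real.norm_eq_abs, abs_mul]
    have h1 : |L2fn (inner ℝ (D ω) Bstar : ℝ)| ≤ 1 := by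
      rw [abs_of_nonneg (L2fn_nonneg _)]; exact L2fn_le_one _
    have h2 := huabs ω
    have h3 : |(inner ℝ (D ω) Δ : ℝ)^2| = |(inner ℝ (D ω) Δ : ℝ)|^2 := by
      rw [abs_pow]
    rw [h3]
    have h4 : |(inner ℝ (D ω) Δ : ℝ)|^2 ≤ (‖D ω‖ * ‖Δ‖)^2 := by
      apply pow_le_pow_left₀ (abs_nonneg _) h2
    nlinarith [abs_nonneg ((inner ℝ (D ω) Δ : ℝ)), sq_nonneg (inner ℝ (D ω) Δ : ℝ),
      abs_nonneg (L2fn (inner ℝ (D ω) Bstar : ℝ)), norm_nonneg (D ω), norm_nonneg Δ]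
  have hint_g4 : Integrable (fun ω => |(inner ℝ (D ω) Δ : ℝ)|^3) P := by
    refine (hDmom.mul_const (‖Δ‖^3)).mono'
      ((continuous_abs.pow 3).comp_aestronglyMeasurable hmeasu) ?_
    refine Filter.Eventually.of_forall (fun ω => ?_)
    rw [Real.norm_eq_abs, abs_of_nonneg (by positivity)]
    calc |(inner ℝ (D ω) Δ : ℝ)|^3 ≤ (‖D ω‖ * ‖Δ‖)^3 :=
          pow_le_pow_left₀ (abs_nonneg _) (huabs ω) 3
      _ = ‖D ω‖^3 * ‖Δ‖^3 := by ring
  have hint_g0 : Integrable (fun ω => logisticLoss (inner ℝ (D ω) (Bstar + Δ))) P :=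
    integrable_logistic_comp D hDmeas hD1 (Bstar + Δ)
  have hint_g1 : Integrable (fun ω => logisticLoss (inner ℝ (D ω) Bstar)) P :=
    integrable_logistic_comp D hDmeas hD1 Bstar
  have hint_g3' : Integrable (fun ω =>
      L2fn (inner ℝ (D ω) Bstar) * ((inner ℝ (D ω) Δ : ℝ)^2 / 2)) P :=
    (hint_g3.div_const 2).congr (Filter.Eventually.of_forall (fun ω => by ring))
  -- pointwise Taylor lower bound
  have hptwise : ∀ ω, -((1/(6*Real.sqrt 3)) * |(inner ℝ (D ω) Δ : ℝ)|^3 / 6)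
      ≤ logisticLoss (inner ℝ (D ω) (Bstar + Δ)) - logisticLoss (inner ℝ (D ω) Bstar)
        - L1fn (inner ℝ (D ω) Bstar) * (inner ℝ (D ω) Δ : ℝ)
        - L2fn (inner ℝ (D ω) Bstar) * ((inner ℝ (D ω) Δ : ℝ)^2 / 2) := by
    intro ω
    have ht := logistic_taylor (inner ℝ (D ω) Bstar : ℝ) (inner ℝ (D ω) Δ : ℝ)
    have hadd : (inner ℝ (D ω) (Bstar + Δ) : ℝ)
        = (inner ℝ (D ω) Bstar : ℝ) + (inner ℝ (D ω) Δ : ℝ) := inner_add_right _ _ _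
    rw [hadd]
    linarith [(abs_le.1 ht).1]
  -- integrate the inequality
  have hmono : ∫ ω, -((1/(6*Real.sqrt 3)) * |(inner ℝ (D ω) Δ : ℝ)|^3 / 6) ∂P
      ≤ ∫ ω, (logisticLoss (inner ℝ (D ω) (Bstar + Δ)) - logisticLoss (inner ℝ (D ω) Bstar)
        - L1fn (inner ℝ (D ω) Bstar) * (inner ℝ (D ω) Δ : ℝ)
        - L2fn (inner ℝ (D ω) Bstar) * ((inner ℝ (D ω) Δ : ℝ)^2 / 2)) ∂P := by
    apply integral_mono (((hint_g4.const_mul _).div_const 6).neg)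
      (((hint_g0.sub hint_g1).sub hint_g2).sub hint_g3') hptwise
  have hiB : Integrable (fun ω => logisticLoss (inner ℝ (D ω) (Bstar + Δ))
      - logisticLoss (inner ℝ (D ω) Bstar)) P := hint_g0.sub hint_g1
  have hiA : Integrable (fun ω => logisticLoss (inner ℝ (D ω) (Bstar + Δ))
      - logisticLoss (inner ℝ (D ω) Bstar)
      - L1fn (inner ℝ (D ω) Bstar) * (inner ℝ (D ω) Δ : ℝ)) P := hiB.sub hint_g2
  rw [integral_sub hiA hint_g3', integral_sub hiB hint_g2,
    integral_sub hint_g0 hint_g1] at hmono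
  rw [hgrad0] at hmono
  have hg4val : ∫ ω, -((1/(6*Real.sqrt 3)) * |(inner ℝ (D ω) Δ : ℝ)|^3 / 6) ∂P
      = -((1/(6*Real.sqrt 3))/6 * ∫ ω, |(inner ℝ (D ω) Δ : ℝ)|^3 ∂P) := by
    rw [integral_neg, ← integral_const_mul]
    congr 1
    apply integral_congr_ae
    exact Filter.Eventually.of_forall (fun ω => by ring)
  have hg3val : ∫ ω, L2fn (inner ℝ (D ω) Bstar) * ((inner ℝ (D ω) Δ : ℝ)^2 / 2) ∂P
      = (∫ ω, L2fn (inner ℝ (D ω) Bstar) * (inner ℝ (D ω) Δ : ℝ)^2 ∂P) / 2 := by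
    rw [← integral_div]
    apply integral_congr_ae
    exact Filter.Eventually.of_forall (fun ω => by ring)
  rw [hg4val, hg3val] at hmono
  -- Hessian lower bound
  have hHessLB := hHess Δ hrk
  rw [hHessEq] at hHessLB
  -- third moment bound
  have hmom_le : ∫ ω, |(inner ℝ (D ω) Δ : ℝ)|^3 ∂P ≤ (∫ ω, ‖D ω‖^3 ∂P) * ‖Δ‖^3 := by
    calc ∫ ω, |(inner ℝ (D ω) Δ : ℝ)|^3 ∂P ≤ ∫ ω, ‖D ω‖^3 * ‖Δ‖^3 ∂P := by
          apply integral_mono hint_g4 (hDmom.mul_const _)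
          intro ω
          calc |(inner ℝ (D ω) Δ : ℝ)|^3 ≤ (‖D ω‖ * ‖Δ‖)^3 :=
                pow_le_pow_left₀ (abs_nonneg _) (huabs ω) 3
            _ = ‖D ω‖^3 * ‖Δ‖^3 := by ring
      _ = (∫ ω, ‖D ω‖^3 ∂P) * ‖Δ‖^3 := by rw [integral_mul_const]
  -- final arithmetic
  have hν0 : (0:ℝ) ≤ ∫ ω, ‖D ω‖^3 ∂P := integral_nonneg (fun ω => by positivity)
  have habs0 : (0:ℝ) ≤ ∫ ω, |(inner ℝ (D ω) Δ : ℝ)|^3 ∂P :=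
    integral_nonneg (fun ω => by positivity)
  have ht0 : (0:ℝ) ≤ ‖Δ‖ := norm_nonneg Δ
  show (∫ ω, logisticLoss (inner ℝ (D ω) (Bstar + Δ)) ∂P)
      - (∫ ω, logisticLoss (inner ℝ (D ω) Bstar) ∂P) ≥ μ/4 * ‖Δ‖^2
  rcases eq_or_lt_of_le hν0 with hν | hν
  · -- zero third moment: the remainder vanishes
    have hz : ∫ ω, |(inner ℝ (D ω) Δ : ℝ)|^3 ∂P = 0 := le_antisymm (by
      calc ∫ ω, |(inner ℝ (D ω) Δ : ℝ)|^3 ∂P ≤ (∫ ω, ‖D ω‖^3 ∂P) * ‖Δ‖^3 := hmom_le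
        _ = 0 := by rw [← hν]; ring) habs0
    rw [hz] at hmono
    nlinarith [sq_nonneg ‖Δ‖]
  · have hc : 0 < 2 * ((1 / (6 * Real.sqrt 3)) * ∫ ω, ‖D ω‖^3 ∂P) :=
      mul_pos two_pos (mul_pos hMpos hν)
    have hrad' : ‖Δ‖ * (2 * ((1 / (6 * Real.sqrt 3)) * ∫ ω, ‖D ω‖^3 ∂P)) ≤ 3 * μ := by
      rw [← le_div_iff₀ hc]; exact hrad
    nlinarith [mul_le_mul_of_nonneg_right hrad' (sq_nonneg ‖Δ‖),
      mul_le_mul_of_nonneg_left hmom_le (le_of_lt (by linarith : (0:ℝ) < (1/(6*Real.sqrt 3))/6)),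
      sq_nonneg ‖Δ‖, mul_nonneg hν0 (pow_nonneg ht0 3)]
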